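/- arXiv:2002.00383 — 7 statements merged into one kernel-verified Lean document; each statement's English description precedes it below -/
import Mathlib

section
/- In a symmetric monoidal category C with unit object 1, if e : I ⟶ 1 is a monomorphism, then e is an idal, i.e. (e ⊗ id_I) = (id_I ⊗ e) as morphisms I ⊗ I ⟶ I (after composing with the left/right unitors). -/
open CategoryTheory MonoidalCategory

theorem whiskerRight_leftUnitor_comp_eq_whiskerLeft_rightUnitor_comp {C : Type*} [Category C]
    [MonoidalCategory C] {X Y : C} (f : X ⟶ 𝟙_ C) (g : Y ⟶ 𝟙_ C) :
    (f ▷ Y) ≫ (λ_ Y).hom ≫ g = (X ◁ g) ≫ (ρ_ X).hom ≫ f := by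
  calc (f ▷ Y) ≫ (λ_ Y).hom ≫ g
      = (f ▷ Y) ≫ (𝟙_ C ◁ g) ≫ (λ_ (𝟙_ C)).hom := by rw [leftUnitor_naturality]
    _ = (X ◁ g) ≫ (f ▷ 𝟙_ C) ≫ (ρ_ (𝟙_ C)).hom := by
        rw [← Category.assoc, ← whisker_exchange, Category.assoc, unitors_equal]
    _ = (X ◁ g) ≫ (ρ_ X).hom ≫ f := by rw [rightUnitor_naturality]

theorem mono_is_idal_general {C : Type*} [Category C] [MonoidalCategory C]
    {I : C} (e : I ⟶ 𝟙_ C) [Mono e] :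
    (e ▷ I) ≫ (λ_ I).hom = (I ◁ e) ≫ (ρ_ I).hom := by
  rw [← cancel_mono e, Category.assoc, Category.assoc]
  exact whiskerRight_leftUnitor_comp_eq_whiskerLeft_rightUnitor_comp e e

/-- In a symmetric monoidal category, a monomorphism `e : I ⟶ 𝟙` is an idal:
`λ_I ∘ (e ⊗ id_I) = ρ_I ∘ (id_I ⊗ e)`. -/
theorem mono_is_idal {C : Type*} [Category C] [MonoidalCategory C] [SymmetricCategory C]
    {I : C} (e : I ⟶ 𝟙_ C) [Mono e] :
    (e ▷ I) ≫ (λ_ I).hom = (I ◁ e) ≫ (ρ_ I).hom :=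
  mono_is_idal_general e
end

section
/- If e : I ⟶ 1 and f : J ⟶ 1 are idals in a symmetric monoidal category C, then the composite I ⊗ J ⟶ 1 ⊗ 1 ≅ 1 (given by (e ⊗ f) followed by the unitor) is again an idal. -/
open CategoryTheory MonoidalCategory

/-!
On `(I ⊗ J) ⊗ (I ⊗ J)`, the left-hand side discards the first `I` and the first `J`. Once the
first `J` is gone the two copies of `I` are adjacent, so the idal law for `e` lets us discard the
second `I` instead. By the interchange law that can happen before the first `J` is discarded; then
the two copies of `J` are adjacent, and the idal law for `f` lets us discard the second `J`
instead, which is the right-hand side.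
-/

namespace CategoryTheory.MonoidalCategory

variable {C : Type*} [Category C] [MonoidalCategory C]

def IsIdal {I : C} (e : I ⟶ 𝟙_ C) : Prop :=
  e ▷ I ≫ (λ_ I).hom = I ◁ e ≫ (ρ_ I).hom

theorem IsIdal.tensor {I J : C} {e : I ⟶ 𝟙_ C} {f : J ⟶ 𝟙_ C} (he : IsIdal e)
    (hf : IsIdal f) : IsIdal ((e ⊗ₘ f) ≫ (λ_ (𝟙_ C)).hom) :=
  calc ((e ⊗ₘ f) ≫ (λ_ (𝟙_ C)).hom) ▷ (I ⊗ J) ≫ (λ_ (I ⊗ J)).hom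
      = (I ◁ f) ▷ (I ⊗ J) ⊗≫ (e ▷ I ≫ (λ_ I).hom) ▷ J := by
        rw [tensorHom_def']; monoidal
    _ = (I ◁ f) ▷ (I ⊗ J) ⊗≫ (I ◁ e ≫ (ρ_ I).hom) ▷ J := by rw [he]
    _ = 𝟙 _ ⊗≫ (I ◁ (f ⊗ₘ e)) ▷ J ⊗≫ 𝟙 _ := by rw [tensorHom_def]; monoidal
    _ = (I ⊗ J) ◁ (e ▷ J) ⊗≫ I ◁ (f ▷ J ≫ (λ_ J).hom) := by rw [tensorHom_def']; monoidal
    _ = (I ⊗ J) ◁ (e ▷ J) ⊗≫ I ◁ (J ◁ f ≫ (ρ_ J).hom) := by rw [hf]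
    _ = (I ⊗ J) ◁ ((e ⊗ₘ f) ≫ (λ_ (𝟙_ C)).hom) ≫ (ρ_ (I ⊗ J)).hom := by
        rw [tensorHom_def]; monoidal

end CategoryTheory.MonoidalCategory

theorem idal_product_is_idal_general {C : Type*} [Category C] [MonoidalCategory C]
    {I J : C} (e : I ⟶ 𝟙_ C) (f : J ⟶ 𝟙_ C)
    (he : (e ▷ I) ≫ (λ_ I).hom = (I ◁ e) ≫ (ρ_ I).hom)
    (hf : (f ▷ J) ≫ (λ_ J).hom = (J ◁ f) ≫ (ρ_ J).hom) :
    (((e ⊗ₘ f) ≫ (λ_ (𝟙_ C)).hom) ▷ (I ⊗ J)) ≫ (λ_ (I ⊗ J)).hom =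
      ((I ⊗ J) ◁ ((e ⊗ₘ f) ≫ (λ_ (𝟙_ C)).hom)) ≫ (ρ_ (I ⊗ J)).hom :=
  IsIdal.tensor he hf

/-- The idal product of two idals is an idal: if `e : I ⟶ 𝟙` and `f : J ⟶ 𝟙` are
idals, then `(e ⊗ f) ≫ λ_𝟙 : I ⊗ J ⟶ 𝟙` is an idal. -/
theorem idal_product_is_idal {C : Type*} [Category C] [MonoidalCategory C] [SymmetricCategory C]
    {I J : C} (e : I ⟶ 𝟙_ C) (f : J ⟶ 𝟙_ C)
    (he : (e ▷ I) ≫ (λ_ I).hom = (I ◁ e) ≫ (ρ_ I).hom)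
    (hf : (f ▷ J) ≫ (λ_ J).hom = (J ◁ f) ≫ (ρ_ J).hom) :
    (((e ⊗ₘ f) ≫ (λ_ (𝟙_ C)).hom) ▷ (I ⊗ J)) ≫ (λ_ (I ⊗ J)).hom =
      ((I ⊗ J) ◁ ((e ⊗ₘ f) ≫ (λ_ (𝟙_ C)).hom)) ≫ (ρ_ (I ⊗ J)).hom :=
  idal_product_is_idal_general e f he hf
end

section
/- Over a Dedekind domain R, every idal e : I ⟶ R with I a finitely generated R-module is isomorphic (in the category of idals) to one of the form J ⊕ M ⟶ R, (j, m) ↦ j, where J ⊆ R is an ideal and M is an R-module with J·M = 0. Specifically: since the ideal e(I) ⊆ R is projective, the kernel of e splits off, I ≅ e(I) ⊕ ker(e), and the idal property forces e(I)·ker(e) = 0. -/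
/-!
A nonzero ideal of a Dedekind domain is invertible as a fractional ideal, hence
projective. So the corestriction `I → e(I)` of an idal splits, which gives
`I ≃ e(I) × ker e` with `e` becoming the first projection. For `k ∈ ker e` the idal
identity reads `e x • k = e k • x = 0`, so `e(I)` annihilates the kernel.
-/

open LinearMap in
theorem LinearMap.exists_linearEquiv_range_prod_ker {R M N : Type*} [Ring R]
    [AddCommGroup M] [Module R M] [AddCommGroup N] [Module R N] (f : M →ₗ[R] N)
    {s : range f →ₗ[R] M} (hs : f.rangeRestrict ∘ₗ s = .id) :
    ∃ φ : M ≃ₗ[R] range f × ker f, ∀ x, ((φ x).1 : N) = f x := by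
  have hs' (y : range f) : f (s y) = y := congr_arg Subtype.val (LinearMap.congr_fun hs y)
  let g : M →ₗ[R] ker f :=
    (LinearMap.id - s ∘ₗ f.rangeRestrict).codRestrict (ker f) fun x => by simp [hs']
  have hg (k : ker f) : g k = k := by
    have hk : f.rangeRestrict k = 0 := Subtype.ext (mem_ker.mp k.2)
    exact Subtype.ext (by simp [g, hk])
  have hfg : IsCompl (ker f.rangeRestrict) (ker g) := by
    rw [ker_rangeRestrict]
    exact isCompl_of_proj hg
  refine ⟨equivProdOfSurjectiveOfIsCompl _ g ?_ ?_ hfg, fun _ => rfl⟩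
  · exact range_eq_top.2 fun y => ⟨s y, LinearMap.congr_fun hs y⟩
  · exact range_eq_top.2 fun k => ⟨k, hg k⟩

open nonZeroDivisors in
theorem IsDedekindDomain.projective_ideal {R : Type*} [CommRing R] [IsDedekindDomain R]
    (J : Ideal R) : Module.Projective R J := by
  rcases eq_or_ne J ⊥ with rfl | hJ
  · infer_instance
  let K := FractionRing R
  have hunit : IsUnit (J : FractionalIdeal R⁰ K) :=
    (FractionalIdeal.coeIdeal_ne_zero.mpr hJ).isUnit
  have : Module.Projective R (Submodule.map (Algebra.linearMap R K) J) :=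
    Submodule.projective_of_isUnit (hunit.map (FractionalIdeal.coeSubmoduleHom R⁰ K))
  exact .of_equiv
    (Submodule.equivMapOfInjective (Algebra.linearMap R K) (IsFractionRing.injective R K) J).symm

theorem smul_eq_zero_of_mem_range_of_mem_ker {R I : Type*} [CommRing R] [AddCommGroup I]
    [Module R I] {e : I →ₗ[R] R} (hidal : ∀ x y : I, e x • y = e y • x) {r : R}
    (hr : r ∈ LinearMap.range e) {k : I} (hk : k ∈ LinearMap.ker e) : r • k = 0 := by
  obtain ⟨x, rfl⟩ := hr
  rw [hidal x k, LinearMap.mem_ker.mp hk, zero_smul]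

theorem idal_dedekind_classification_general {R : Type*} [CommRing R] [IsDedekindDomain R]
    {I : Type*} [AddCommGroup I] [Module R I]
    (e : I →ₗ[R] R) (hidal : ∀ x y : I, e x • y = e y • x) :
    ∃ φ : I ≃ₗ[R] (LinearMap.range e × LinearMap.ker e),
      (∀ x : I, e x = ((φ x).1 : R)) ∧
        (∀ r : R, r ∈ LinearMap.range e → ∀ k : I, k ∈ LinearMap.ker e →
          r • k = (0 : I)) := by
  have := IsDedekindDomain.projective_ideal (LinearMap.range e)
  obtain ⟨s, hs⟩ := e.rangeRestrict.exists_rightInverse_of_surjective e.range_rangeRestrict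
  obtain ⟨φ, hφ⟩ := e.exists_linearEquiv_range_prod_ker hs
  exact ⟨φ, fun x => (hφ x).symm,
    fun _ hr _ hk => smul_eq_zero_of_mem_range_of_mem_ker hidal hr hk⟩

/-- Over a Dedekind domain, every idal `e : I ⟶ R` with `I` finitely generated is
isomorphic, in the category of idals, to one of the form `J ⊕ M ⟶ R`, `(j,m) ↦ j`,
with `J = e(I)` an ideal and `M = ker e` a module annihilated by `J`.  Concretely:
there is a linear isomorphism `φ : I ≃ (range e) × (ker e)` under which `e` becomes
the first projection (followed by the inclusion of the image ideal), and the image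
ideal annihilates the kernel. -/
theorem idal_dedekind_classification {R : Type*} [CommRing R] [IsDedekindDomain R]
    {I : Type*} [AddCommGroup I] [Module R I] [Module.Finite R I]
    (e : I →ₗ[R] R) (hidal : ∀ x y : I, e x • y = e y • x) :
    ∃ φ : I ≃ₗ[R] (LinearMap.range e × LinearMap.ker e),
      (∀ x : I, e x = ((φ x).1 : R)) ∧
        (∀ r : R, r ∈ LinearMap.range e → ∀ k : I, k ∈ LinearMap.ker e →
          r • k = (0 : I)) :=
  idal_dedekind_classification_general e hidal
end

section
/- Let R be a commutative ring and let e : I ⟶ R, f : J ⟶ R be two idals of R-modules such that the map (e, f) : I ⊕ J ⟶ R is surjective. Then the commutative square with vertices I ⊗_R J, I, J, R (maps: e ⊗ id_J : I ⊗ J ⟶ J, id_I ⊗ f : I ⊗ J ⟶ I, and f : J ⟶ R, e : I ⟶ R) is a pushout square of R-modules. -/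
open TensorProduct CategoryTheory Limits

/-!
Choose `a`, `b` with `e a + f b = 1`. A cocone `(g : I → M, h : J → M)` under the square is
compatible in the sense `h (e x • y) = g (f y • x)`, and the idal identities then show that
`r ↦ r • (g a + h b)` restricts to `g` along `e` and to `h` along `f`. Uniqueness holds because
`(e, f)` is surjective onto `R`.
-/

section Idal

variable {R I J M : Type*} [CommRing R] [AddCommGroup I] [AddCommGroup J] [AddCommGroup M]
  [Module R I] [Module R J] [Module R M]

def IsIdal (e : I →ₗ[R] R) : Prop := ∀ x y : I, e x • y = e y • x

theorem IsIdal.toSpanSingleton_comp {e : I →ₗ[R] R} (he : IsIdal e) (f : J →ₗ[R] R) {a : I} {b : J}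
    (hab : e a + f b = 1) {g : I →ₗ[R] M} {h : J →ₗ[R] M}
    (hgh : ∀ x y, h (e x • y) = g (f y • x)) :
    (LinearMap.toSpanSingleton R M (g a + h b)).comp e = g := by
  ext x
  calc e x • (g a + h b) = g (e x • a) + h (e x • b) := by simp only [smul_add, map_smul]
    _ = g (e a • x) + g (f b • x) := by rw [he a x, hgh x b]
    _ = g x := by rw [← map_add, ← add_smul, hab, one_smul]

end Idal

theorem LinearMap.ext_of_surjective_coprod {R P N I J : Type*} [Semiring R] [AddCommMonoid P]
    [AddCommMonoid N] [AddCommMonoid I] [AddCommMonoid J] [Module R P] [Module R N] [Module R I]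
    [Module R J] {e : I →ₗ[R] P} {f : J →ₗ[R] P} (hsurj : Function.Surjective (e.coprod f))
    {φ ψ : P →ₗ[R] N} (he : φ.comp e = ψ.comp e) (hf : φ.comp f = ψ.comp f) : φ = ψ :=
  (LinearMap.cancel_right hsurj).1 (by rw [comp_coprod, comp_coprod, he, hf])

/-- If `e : I ⟶ R` and `f : J ⟶ R` are idals of `R`-modules with `(e,f) : I ⊕ J ⟶ R`
surjective, then the square with vertices `I ⊗[R] J`, `J`, `I`, `R`, whose maps are
`e ⊗ id_J : I ⊗ J ⟶ J` (i.e. `x ⊗ y ↦ e x • y`), `id_I ⊗ f : I ⊗ J ⟶ I`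
(i.e. `x ⊗ y ↦ f y • x`), `f : J ⟶ R` and `e : I ⟶ R`, is a pushout square of
`R`-modules. -/
theorem idal_cover_pushout {R : Type u} [CommRing R] {I J : Type u} [AddCommGroup I]
    [AddCommGroup J] [Module R I] [Module R J] (e : I →ₗ[R] R) (f : J →ₗ[R] R)
    (he : ∀ x y : I, e x • y = e y • x) (hf : ∀ x y : J, f x • y = f y • x)
    (hsurj : Function.Surjective ⇑(LinearMap.coprod e f)) :
    IsPushout
      (ModuleCat.ofHom (TensorProduct.lift ((LinearMap.lsmul R J).comp e)))
      (ModuleCat.ofHom (TensorProduct.lift (((LinearMap.lsmul R I).comp f).flip)))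
      (ModuleCat.ofHom f) (ModuleCat.ofHom e) := by
  obtain ⟨⟨a, b⟩, hab⟩ := hsurj 1
  replace hab : e a + f b = 1 := hab
  set α := ModuleCat.ofHom (TensorProduct.lift ((LinearMap.lsmul R J).comp e))
  set β := ModuleCat.ofHom (TensorProduct.lift (((LinearMap.lsmul R I).comp f).flip))
  have hcomm : α ≫ ModuleCat.ofHom f = β ≫ ModuleCat.ofHom e :=
    ModuleCat.hom_ext <| TensorProduct.ext' fun x y => by
      simp only [α, β, ModuleCat.hom_comp, ModuleCat.hom_ofHom, LinearMap.comp_apply, lift.tmul,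
        LinearMap.lsmul_apply, LinearMap.flip_apply, map_smul, smul_eq_mul, mul_comm]
  have hdesc (s : PushoutCocone α β) :
      (LinearMap.toSpanSingleton R _ (s.inr.hom a + s.inl.hom b)).comp e = s.inr.hom ∧
      (LinearMap.toSpanSingleton R _ (s.inr.hom a + s.inl.hom b)).comp f = s.inl.hom := by
    have hcompat (x : I) (y : J) : s.inl.hom (e x • y) = s.inr.hom (f y • x) :=
      LinearMap.congr_fun (congrArg ModuleCat.Hom.hom s.condition) (x ⊗ₜ y)
    refine ⟨IsIdal.toSpanSingleton_comp he f hab hcompat, ?_⟩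
    rw [add_comm]
    exact IsIdal.toSpanSingleton_comp hf e (by rwa [add_comm]) fun y x => (hcompat x y).symm
  refine IsPushout.of_isColimit' ⟨hcomm⟩ (PushoutCocone.IsColimit.mk _
    (fun s => ModuleCat.ofHom (LinearMap.toSpanSingleton R _ (s.inr.hom a + s.inl.hom b)))
    (fun s => ModuleCat.hom_ext (hdesc s).2) (fun s => ModuleCat.hom_ext (hdesc s).1)
    (fun s m hl hr => ModuleCat.hom_ext ?_))
  refine LinearMap.ext_of_surjective_coprod hsurj ?_ ?_
  · rw [ModuleCat.hom_ofHom, (hdesc s).1, ← hr]; rfl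
  · rw [ModuleCat.hom_ofHom, (hdesc s).2, ← hl]; rfl
end

section
/- Let R be a commutative ring and let e : I ⟶ R, f : J ⟶ R be idals of R-modules forming an idal cover (i.e. (e,f) : I ⊕ J ⟶ R is surjective). Then for all natural numbers n, m ≥ 0, the tensor power idals e^{⊗n} : I^{⊗n} ⟶ R and f^{⊗m} : J^{⊗m} ⟶ R also form an idal cover. -/
open TensorProduct PiTensorProduct

/-! A map `(e, f) : M ⊕ N ⟶ R` is onto exactly when some values `e p` and `f q` are coprime
(from `1 = e p + f q`, scale). Powers of coprime elements are coprime, and `e^{⊗n}` takes the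
value `e p ^ n` at `p ⊗ ⋯ ⊗ p`. -/

/-- The `n`-th tensor power of an idal `e : I ⟶ R`:
`I^{⊗n} ⟶ R`, `x₁ ⊗ ⋯ ⊗ xₙ ↦ e x₁ ⋯ e xₙ`. -/
noncomputable def tpowIdal {R : Type u} [CommRing R] {I : Type u} [AddCommGroup I]
    [Module R I] (e : I →ₗ[R] R) (n : ℕ) : (⨂[R]^n I) →ₗ[R] R :=
  PiTensorProduct.lift ((MultilinearMap.mkPiAlgebra R (Fin n) R).compLinearMap fun _ => e)

theorem LinearMap.surjective_coprod_iff_exists_isCoprime {R M N : Type*} [CommSemiring R]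
    [AddCommMonoid M] [AddCommMonoid N] [Module R M] [Module R N]
    (e : M →ₗ[R] R) (f : N →ₗ[R] R) :
    Function.Surjective (e.coprod f) ↔ ∃ p q, IsCoprime (e p) (f q) := by
  constructor
  · intro hsurj
    obtain ⟨⟨p, q⟩, hpq⟩ := hsurj 1
    exact ⟨p, q, 1, 1, by simpa using hpq⟩
  · rintro ⟨p, q, a, b, hab⟩ r
    refine ⟨((r * a) • p, (r * b) • q), ?_⟩
    simp only [coprod_apply, map_smul, smul_eq_mul, mul_assoc, ← mul_add, hab, mul_one]

theorem tpowIdal_tprod {R : Type u} [CommRing R] {I : Type u} [AddCommGroup I]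
    [Module R I] (e : I →ₗ[R] R) {n : ℕ} (x : Fin n → I) :
    tpowIdal e n (tprod R x) = ∏ i, e (x i) := by
  simp [tpowIdal]

theorem idal_cover_tensor_pow_general {R : Type u} [CommRing R] {I J : Type u} [AddCommGroup I]
    [AddCommGroup J] [Module R I] [Module R J] (e : I →ₗ[R] R) (f : J →ₗ[R] R)
    (hcov : Function.Surjective ⇑(LinearMap.coprod e f)) (n m : ℕ) :
    Function.Surjective ⇑(LinearMap.coprod (tpowIdal e n) (tpowIdal f m)) := by
  obtain ⟨p, q, hpq⟩ := (e.surjective_coprod_iff_exists_isCoprime f).mp hcov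
  refine (LinearMap.surjective_coprod_iff_exists_isCoprime _ _).mpr
    ⟨tprod R fun _ => p, tprod R fun _ => q, ?_⟩
  simpa only [tpowIdal_tprod, Finset.prod_const, Finset.card_univ, Fintype.card_fin]
    using hpq.pow

/-- If the idals `e : I ⟶ R` and `f : J ⟶ R` form an idal cover (`I ⊕ J ⟶ R`
surjective), then for all `n m : ℕ` the tensor power idals
`e^{⊗n} : I^{⊗n} ⟶ R` and `f^{⊗m} : J^{⊗m} ⟶ R` also form an idal cover. -/
theorem idal_cover_tensor_pow {R : Type u} [CommRing R] {I J : Type u} [AddCommGroup I]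
    [AddCommGroup J] [Module R I] [Module R J] (e : I →ₗ[R] R) (f : J →ₗ[R] R)
    (he : ∀ x y : I, e x • y = e y • x) (hf : ∀ x y : J, f x • y = f y • x)
    (hcov : Function.Surjective ⇑(LinearMap.coprod e f)) (n m : ℕ) :
    Function.Surjective ⇑(LinearMap.coprod (tpowIdal e n) (tpowIdal f m)) :=
  idal_cover_tensor_pow_general e f hcov n m
end

section
/- Let C be a symmetric monoidal closed category, e : J ⟶ 1 an idal, and M an object such that the induced map M ≅ [1, M] ⟶ [J, M] (internal hom precomposition with e) is an isomorphism. Then for every n ≥ 1 the induced map M ⟶ [J^{⊗n}, M] is an isomorphism. -/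
/-!
For `n = 0` the canonical map `M ⟶ [𝟙, M]` is the unit isomorphism. Currying identifies
`[J^{⊗n} ⊗ J, M]` with `[J, [J^{⊗n}, M]]`, and under this identification the canonical map for
`J^{⊗(n+1)}` becomes the canonical map `M ⟶ [J, M]` followed by `[J, -]` applied to the canonical
map for `J^{⊗n}`. Induction on `n` then shows that every canonical map is an isomorphism.
-/

open CategoryTheory MonoidalCategory

variable {C : Type*} [Category C] [MonoidalCategory C]

/-- Iterated tensor powers `J^{⊗n}` (with `J^{⊗0} = 𝟙` and `J^{⊗(n+1)} = J^{⊗n} ⊗ J`). -/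
def tensorPowObj (J : C) : ℕ → C
  | 0 => 𝟙_ C
  | n + 1 => tensorPowObj J n ⊗ J

/-- Iterated tensor power `e^{⊗n} : J^{⊗n} ⟶ 𝟙` of a morphism `e : J ⟶ 𝟙`. -/
def tensorPowMap {J : C} (e : J ⟶ 𝟙_ C) : ∀ n, tensorPowObj J n ⟶ 𝟙_ C
  | 0 => 𝟙 (𝟙_ C)
  | n + 1 => (tensorPowMap e n ⊗ₘ e) ≫ (λ_ (𝟙_ C)).hom

namespace CategoryTheory.MonoidalClosed

variable [MonoidalClosed C]

lemma curry_comp_ihomCurry {A B X Y : C} (h : (A ⊗ B) ⊗ X ⟶ Y) :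
    curry h ≫ ihomCurry A B Y = curry (curry ((α_ A B X).inv ≫ h)) := by
  rw [ihomCurry, ← curry_natural_left, ← curry_natural_left,
    associator_inv_naturality_right_assoc, whiskerLeft_curry_ihom_ev_app]

/-- The canonical map `M ≅ [𝟙, M] ⟶ [A, M]` induced by `q : A ⟶ 𝟙`. -/
def precompUnit {A : C} (q : A ⟶ 𝟙_ C) (M : C) : M ⟶ (ihom A).obj M :=
  curry ((q ▷ M) ≫ (λ_ M).hom)

lemma precompUnit_id (M : C) : precompUnit (𝟙 (𝟙_ C)) M = unitNatIso.hom.app M := by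
  simp [precompUnit, unitNatIso, conjugateEquiv_apply_app, curry_eq]

instance isIso_precompUnit_id (M : C) : IsIso (precompUnit (𝟙 (𝟙_ C)) M) := by
  rw [precompUnit_id]
  infer_instance

lemma precompUnit_tensorHom_comp_ihomCurry {A B : C} (q : A ⟶ 𝟙_ C) (e : B ⟶ 𝟙_ C) (M : C) :
    precompUnit ((q ⊗ₘ e) ≫ (λ_ (𝟙_ C)).hom) M ≫ ihomCurry A B M =
      precompUnit e M ≫ (ihom B).map (precompUnit q M) := by
  have hcomponents : (α_ A B M).inv ≫ ((q ⊗ₘ e) ≫ (λ_ (𝟙_ C)).hom) ▷ M ≫ (λ_ M).hom =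
      A ◁ ((e ▷ M) ≫ (λ_ M).hom) ≫ (q ▷ M) ≫ (λ_ M).hom := by
    simp only [MonoidalCategory.tensorHom_def, comp_whiskerRight, Category.assoc]
    rw [whisker_exchange_assoc, leftUnitor_naturality, ← associator_inv_naturality_left_assoc,
      ← associator_inv_naturality_middle_assoc, ← leftUnitor_tensor_hom_assoc,
      leftUnitor_naturality_assoc]
  rw [precompUnit, curry_comp_ihomCurry, hcomponents, curry_natural_left, precompUnit,
    precompUnit, curry_natural_right]

lemma isIso_precompUnit_tensorHom {A B : C} (q : A ⟶ 𝟙_ C) (e : B ⟶ 𝟙_ C) (M : C)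
    [IsIso (precompUnit q M)] [IsIso (precompUnit e M)] :
    IsIso (precompUnit ((q ⊗ₘ e) ≫ (λ_ (𝟙_ C)).hom) M) := by
  have : IsIso (ihomCurry A B M) := (ihomCurryIso A B M).isIso_hom
  have : IsIso (precompUnit ((q ⊗ₘ e) ≫ (λ_ (𝟙_ C)).hom) M ≫ ihomCurry A B M) := by
    rw [precompUnit_tensorHom_comp_ihomCurry]
    infer_instance
  exact IsIso.of_isIso_comp_right _ (ihomCurry A B M)

lemma isIso_precompUnit_tensorPowMap {J : C} (e : J ⟶ 𝟙_ C) (M : C)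
    [IsIso (precompUnit e M)] : ∀ n, IsIso (precompUnit (tensorPowMap e n) M)
  | 0 => isIso_precompUnit_id M
  | n + 1 =>
    have := isIso_precompUnit_tensorPowMap e M n
    isIso_precompUnit_tensorHom (tensorPowMap e n) e M

end CategoryTheory.MonoidalClosed

theorem idal_hom_iso_tensor_pow_general [MonoidalClosed C]
    {J : C} (e : J ⟶ 𝟙_ C)
    (M : C)
    (h1 : IsIso (MonoidalClosed.curry ((e ▷ M) ≫ (λ_ M).hom))) :
    ∀ n : ℕ, 1 ≤ n →
      IsIso (MonoidalClosed.curry ((tensorPowMap e n ▷ M) ≫ (λ_ M).hom)) :=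
  fun n _ =>
    have : IsIso (MonoidalClosed.precompUnit e M) := h1
    MonoidalClosed.isIso_precompUnit_tensorPowMap e M n

/-- Let `C` be symmetric monoidal closed, `e : J ⟶ 𝟙` an idal and `M` an object such
that the canonical map `M ⟶ [J, M]` (the curry of `(e ▷ M) ≫ λ_M`) is an isomorphism.
Then for every `n ≥ 1` the canonical map `M ⟶ [J^{⊗n}, M]` is an isomorphism. -/
theorem idal_hom_iso_tensor_pow [SymmetricCategory C] [MonoidalClosed C]
    {J : C} (e : J ⟶ 𝟙_ C)
    (hidal : (e ▷ J) ≫ (λ_ J).hom = (J ◁ e) ≫ (ρ_ J).hom) (M : C)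
    (h1 : IsIso (MonoidalClosed.curry ((e ▷ M) ≫ (λ_ M).hom))) :
    ∀ n : ℕ, 1 ≤ n →
      IsIso (MonoidalClosed.curry ((tensorPowMap e n ▷ M) ≫ (λ_ M).hom)) :=
  idal_hom_iso_tensor_pow_general e M h1
end

section
/- Let R be a commutative ring, f ∈ R, and let e : R ⟶ R be the idal given by multiplication by f. Then for every R-module M, the colimit of the sequence Hom_R(R, M) ⟶ Hom_R(R, M) ⟶ ⋯ with transition maps given by precomposition with multiplication by f is naturally isomorphic to the localization M[f⁻¹] = M ⊗_R R[f⁻¹]. In particular, Γ(D(f), M~) ≅ colim_n Hom_R(J^{⊗n}, M) for the idal J = (R, f). -/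
/-!
The colimit `L` of `M →(·f) M →(·f) ⋯` receives `M` at level `0`, and this map is a
localization at the powers of `f`: the class of `m` at level `i` is `m / fⁱ`, so every element
of `L` is a fraction, `f` acts invertibly on `L` (dividing by `f` is moving one level up), and
`m` dies in `L` exactly when some power of `f` kills it.
-/

open Module

/-- The directed system `M → M → M → ⋯` whose transition map from level `i` to level
`j` is multiplication by `f ^ (j - i)` (so each single step is multiplication by `f`).
This is the system `Hom(R, M) → Hom(R, M) → ⋯` of the idal `(R, f)`. -/
def mulPowSystem {R : Type u} [CommRing R] {M : Type u} [AddCommGroup M] [Module R M]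
    (f : R) : ∀ i j : ℕ, i ≤ j → ((fun _ : ℕ => M) i) →ₗ[R] ((fun _ : ℕ => M) j) :=
  fun i j _ => (f ^ (j - i)) • (LinearMap.id : M →ₗ[R] M)

section

variable {R : Type u} [CommRing R] {M : Type u} [AddCommGroup M] [Module R M] (f : R)

lemma mulPowSystem_apply {i j : ℕ} (h : i ≤ j) (m : M) :
    mulPowSystem (M := M) f i j h m = f ^ (j - i) • m :=
  rfl

instance mulPowSystem.directedSystem :
    DirectedSystem (fun _ : ℕ => M) (mulPowSystem (M := M) f · · ·) where
  map_self i m := by simp [mulPowSystem_apply]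
  map_map {k j i} _ _ m := by
    rw [mulPowSystem_apply, mulPowSystem_apply, mulPowSystem_apply, smul_smul, ← pow_add]
    congr 2
    omega

local notation "ι" => DirectLimit.of R ℕ (fun _ : ℕ => M) (mulPowSystem f)

lemma mulPowSystem.of_add_pow_smul (i n : ℕ) (m : M) : ι (i + n) (f ^ n • m) = ι i m := by
  simpa [mulPowSystem_apply] using
    DirectLimit.of_f (f := mulPowSystem f) (hij := i.le_add_right n) (x := m)

lemma mulPowSystem.pow_smul_of_add (i n : ℕ) (m : M) : f ^ n • ι (i + n) m = ι i m := by
  rw [← map_smul, of_add_pow_smul]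

lemma mulPowSystem.of_eq_zero_iff (i : ℕ) (m : M) : ι i m = 0 ↔ ∃ n, f ^ n • m = 0 := by
  refine ⟨fun h => ?_, fun ⟨n, hn⟩ => by rw [← of_add_pow_smul f i n, hn, map_zero]⟩
  obtain ⟨j, _, hj⟩ := DirectLimit.of.zero_exact h
  exact ⟨j - i, hj⟩

lemma mulPowSystem.bijective_smul :
    Function.Bijective (f • · : DirectLimit (fun _ : ℕ => M) (mulPowSystem f) → _) := by
  refine ⟨(injective_iff_map_eq_zero (DistribSMul.toAddMonoidHom _ f)).2 fun x hx => ?_,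
    fun x => ?_⟩
  · induction x using DirectLimit.induction_on with
    | ih i m =>
      obtain ⟨n, hn⟩ := (of_eq_zero_iff f i (f • m)).1 (by rw [map_smul]; exact hx)
      exact (of_eq_zero_iff f i m).2 ⟨n + 1, by rwa [pow_succ, mul_smul]⟩
  · induction x using DirectLimit.induction_on with
    | ih i m => exact ⟨ι (i + 1) m, by simpa using pow_smul_of_add f i 1 m⟩

instance mulPowSystem.isLocalizedModule_of_zero :
    IsLocalizedModule (Submonoid.powers f) (ι 0) where
  map_units := by
    rintro ⟨_, n, rfl⟩
    simpa using ((End.isUnit_iff _).2 (bijective_smul f)).pow n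
  surj x := by
    induction x using DirectLimit.induction_on with
    | ih i m =>
      exact ⟨(m, ⟨f ^ i, i, rfl⟩), by simpa [Submonoid.smul_def] using pow_smul_of_add f 0 i m⟩
  exists_of_eq {x y} h := by
    obtain ⟨n, hn⟩ := (of_eq_zero_iff f 0 (x - y)).1 (by rw [map_sub, h, sub_self])
    exact ⟨⟨f ^ n, n, rfl⟩, by simpa [Submonoid.smul_def, smul_sub, sub_eq_zero] using hn⟩

end

/-- Deligne's formula for a basic open: for the idal `e = (·f) : R ⟶ R` given by
multiplication by `f`, the colimit of the sequence
`Hom(R,M) → Hom(R,M) → ⋯` (transition maps given by precomposition with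
multiplication by `f`, i.e. the system `M →(·f) M →(·f) ⋯`) is isomorphic to the
localization `M[f⁻¹]`, i.e. `Γ(D(f), M~) ≅ colim_n Hom(J^{⊗n}, M)`. -/
theorem colimit_hom_iso_localization {R : Type u} [CommRing R] {M : Type u}
    [AddCommGroup M] [Module R M] (f : R) :
    Nonempty
      (Module.DirectLimit (R := R) (fun _ : ℕ => M) (mulPowSystem f) ≃ₗ[R]
        LocalizedModule (Submonoid.powers f) M) :=
  ⟨(IsLocalizedModule.iso (Submonoid.powers f)
    (DirectLimit.of R ℕ (fun _ : ℕ => M) (mulPowSystem f) 0)).symm⟩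
end
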